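/- Let \mu = (\mu_1, \dots, \mu_n) \in \mathbb{R}_{>0}^n, B \ge 1, and let \bar{a} \in \mathbb{N}^n with \bar{a}_1 + \dots + \bar{a}_n = B be an allocation minimizing \ell(\cdot, \mu) over \mathcal{A} that satisfies \bar{a}_j \mu_j \le (\bar{a}_i + 1)\mu_i for all i, j \in [n]. Then for every i \in [n], the smallest positive integer k_i satisfying (\bar{a}_i + k_i)\mu_i > \ell(\bar{a}, \mu) exists and satisfies k_i \in \{1, 2\}. -/
import Mathlib


/-- The proxy loss `ℓ(a, μ) := maxᵢ aᵢ μᵢ` (over a nonempty finite index type). -/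
noncomputable def proxyLoss {n : ℕ} (a : Fin n → ℕ) (μ : Fin n → ℝ) : ℝ :=
  ⨆ i, (a i : ℝ) * μ i

/-- the minimal over-allocation `kᵢ` exists and `kᵢ ∈ {1,2}`.
Let `μ ∈ ℝ>0ⁿ`, `B ≥ 1`, and let `ā ∈ ℕⁿ` with `∑ āᵢ = B` minimize `ℓ(·, μ)`
over `𝒜` and satisfy `āⱼ μⱼ ≤ (āᵢ + 1) μᵢ` for all `i, j`. Then for every `i`,
the smallest positive integer `kᵢ` with `(āᵢ + kᵢ) μᵢ > ℓ(ā, μ)` exists and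
satisfies `kᵢ ∈ {1, 2}`. -/
theorem stmt_11 (n B : ℕ) (hn : 1 ≤ n) (hB : 1 ≤ B)
    (μ : Fin n → ℝ) (hμ : ∀ i, 0 < μ i)
    (abar : Fin n → ℕ) (hsum : ∑ i, abar i = B)
    (hopt : ∀ b : Fin n → ℕ, (∑ i, b i) = B → proxyLoss abar μ ≤ proxyLoss b μ)
    (hRAS : ∀ i j : Fin n, (abar j : ℝ) * μ j ≤ ((abar i : ℝ) + 1) * μ i) :
    ∀ i : Fin n, ∃ k : ℕ, 0 < k ∧
      ((abar i : ℝ) + k) * μ i > proxyLoss abar μ ∧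
      (∀ m : ℕ, 0 < m → ((abar i : ℝ) + m) * μ i > proxyLoss abar μ → k ≤ m) ∧
      (k = 1 ∨ k = 2) := by
  intro i
  have hne : Nonempty (Fin n) := ⟨⟨0, hn⟩⟩
  have hL : proxyLoss abar μ ≤ ((abar i : ℝ) + 1) * μ i :=
    ciSup_le (fun j => hRAS i j)
  by_cases h1 : ((abar i : ℝ) + 1) * μ i > proxyLoss abar μ
  · exact ⟨1, one_pos, by push_cast; exact h1, fun m hm _ => hm, Or.inl rfl⟩
  · refine ⟨2, two_pos, ?_, ?_, Or.inr rfl⟩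
    · push_cast
      have : ((abar i : ℝ) + 1) * μ i < ((abar i : ℝ) + 2) * μ i := by
        have := hμ i; nlinarith
      linarith
    · intro m hm hgt
      rcases Nat.lt_or_ge m 2 with h | h
      · interval_cases m
        · exact absurd (by push_cast at hgt ⊢; exact hgt) h1
      · exact h
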